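/- Let (G,d) be a p-uniformly convex space with constant c ∈ (1,2] that is symmetric perpendicular, C ⊂ G closed and convex, g proper convex lsc, and Ω := C ∩ argmin g ≠ ∅. Then the projected-gradient operator T := P_C ∘ (β prox^p_{g,λ} ⊕ (1−β)Id) is pointwise almost α-firmly nonexpansive at every y ∈ Ω on G with constant α_PG = 1/((c/2)(1−α_β) + 1) and violation ε_PG = ε_c·β, where α_β = α_c β^{p−1}/(α_c β^{p−1} − α_c β + 1), α_c = c(c−1)/(c(c−1)+2), ε_c = (2−c)/(c−1). -/

import Mathlib

noncomputable def alphac (c : ℝ) : ℝ := c * (c - 1) / (c * (c - 1) + 2)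

noncomputable def epsc (c : ℝ) : ℝ := (2 - c) / (c - 1)

noncomputable def alphabeta (p c β : ℝ) : ℝ :=
  alphac c * β ^ (p - 1) / (alphac c * β ^ (p - 1) - alphac c * β + 1)

noncomputable def alphaPG (p c β : ℝ) : ℝ := 1 / (c / 2 * (1 - alphabeta p c β) + 1)

/-- The geodesic segment from `q` to `a` is perpendicular at `q` to the geodesic segment
from `q` to `b`. -/
def Perp {G : Type*} [MetricSpace G] (geo : G → G → ℝ → G) (q a b : G) : Prop :=
  ∀ s ∈ Set.Icc (0:ℝ) 1, ∀ t ∈ Set.Icc (0:ℝ) 1,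
    dist (geo q a s) q ≤ dist (geo q a s) (geo q b t)

/-!
Write `S x := β prox x ⊕ (1 − β) x` and `κ := c / 2`. Uniform convexity along the geodesic from
`x` to `prox x`, evaluated at `y`, turns the almost firm nonexpansiveness of `prox` into that of
`S`; since `d(x, S x) = β d(x, prox x)`, the new constant `α_β` is read off from the factor `β ^ p`.

For the composition with the projection, uniform convexity along the geodesic from `x` to
`P (S x)`, evaluated at `S x` and at the parameter `α_β`, bounds `κ (1 − α_β) d(x, P (S x)) ^ p`
by `(1 − α_β)/α_β · d(x, S x) ^ p + d(S x, P (S x)) ^ p`. These are exactly the two terms that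
the firmness inequalities of `S` and `P` subtract, so chaining them gives the constant
`1 / (κ (1 − α_β) + 1)`.
-/

open Set

section UniformlyConvex

variable {G : Type*} [MetricSpace G]

def IsPUniformlyConvex (p c : ℝ) (geo : G → G → ℝ → G) : Prop :=
  ∀ x y z : G, ∀ t ∈ Icc (0:ℝ) 1,
    dist z (geo x y t) ^ p
      ≤ (1 - t) * dist z x ^ p + t * dist z y ^ p - c / 2 * t * (1 - t) * dist x y ^ p

def AlmostFirmlyNonexpansiveAt (p c α ε : ℝ) (T : G → G) (y : G) : Prop :=
  ∀ x, dist (T x) y ^ p ≤ (1 + ε) * dist x y ^ p - (1 - α) / α * (c / 2 * dist (T x) x ^ p)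

/-- The constant `α_β` of the relaxation `β T ⊕ (1 − β) Id` of an operator with constant `α`. -/
noncomputable def relaxedConstant (α p β : ℝ) : ℝ :=
  α * β ^ (p - 1) / (α * β ^ (p - 1) - α * β + 1)

theorem alphac_mem_Ioo {c : ℝ} (hc : 1 < c) : alphac c ∈ Ioo 0 1 := by
  have hpos : 0 < c * (c - 1) := mul_pos (by linarith) (by linarith)
  refine ⟨div_pos hpos (by linarith), ?_⟩
  rw [alphac, div_lt_one (by linarith)]
  linarith

section relaxedConstant

variable {α p β : ℝ} (hα₀ : 0 < α) (hα₁ : α ≤ 1) (hβ₀ : 0 < β) (hβ₁ : β ≤ 1)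
include hα₀ hα₁ hβ₀ hβ₁

theorem relaxedConstant_denom_pos : 0 < α * β ^ (p - 1) - α * β + 1 := by
  have : 0 < α * β ^ (p - 1) := mul_pos hα₀ (Real.rpow_pos_of_pos hβ₀ _)
  nlinarith

theorem relaxedConstant_mem_Ioc : relaxedConstant α p β ∈ Ioc 0 1 := by
  have hden := relaxedConstant_denom_pos (p := p) hα₀ hα₁ hβ₀ hβ₁
  refine ⟨div_pos (mul_pos hα₀ (Real.rpow_pos_of_pos hβ₀ _)) hden, ?_⟩
  rw [relaxedConstant, div_le_one hden]
  nlinarith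

theorem one_sub_relaxedConstant_div_mul_rpow :
    (1 - relaxedConstant α p β) / relaxedConstant α p β * β ^ p
      = β * (1 - β) + β * ((1 - α) / α) := by
  have hden := (relaxedConstant_denom_pos (p := p) hα₀ hα₁ hβ₀ hβ₁).ne'
  have hb := (Real.rpow_pos_of_pos hβ₀ (p - 1)).ne'
  have hβp : β ^ p = β ^ (p - 1) * β := by
    rw [← Real.rpow_add_one hβ₀.ne', sub_add_cancel]
  rw [relaxedConstant, hβp]
  generalize β ^ (p - 1) = b at hden hb ⊢
  generalize hD : α * b - α * β + 1 = D at hden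
  field_simp
  subst hD
  ring

end relaxedConstant

namespace IsPUniformlyConvex

variable {p c : ℝ} {geo : G → G → ℝ → G}

/-- Uniform convexity at `m` along the geodesic from `x` to `w`, divided by `t`. -/
theorem mul_dist_rpow_le (hG : IsPUniformlyConvex p c geo) (x w m : G) {t : ℝ}
    (ht₀ : 0 < t) (ht₁ : t ≤ 1) :
    c / 2 * (1 - t) * dist x w ^ p ≤ (1 - t) / t * dist x m ^ p + dist m w ^ p := by
  have hcvx := hG x w m t ⟨ht₀.le, ht₁⟩
  have hnn : 0 ≤ dist m (geo x w t) ^ p := Real.rpow_nonneg dist_nonneg p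
  rw [dist_comm m x] at hcvx
  have key : (1 - t) / t * dist x m ^ p + dist m w ^ p - c / 2 * (1 - t) * dist x w ^ p
      = t⁻¹ * ((1 - t) * dist x m ^ p + t * dist m w ^ p
          - c / 2 * t * (1 - t) * dist x w ^ p) := by
    field_simp
  rw [← sub_nonneg, key]
  exact mul_nonneg (inv_nonneg.2 ht₀.le) (by linarith)

theorem dist_geo_rpow_le (hG : IsPUniformlyConvex p c geo) {α ε : ℝ} {T : G → G} {y : G}
    (hT : AlmostFirmlyNonexpansiveAt p c α ε T y) {β : ℝ} (hβ : β ∈ Icc (0:ℝ) 1) (x : G) :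
    dist (geo x (T x) β) y ^ p
      ≤ (1 + ε * β) * dist x y ^ p
        - c / 2 * (β * (1 - β) + β * ((1 - α) / α)) * dist x (T x) ^ p := by
  have hcvx := hG x (T x) y β hβ
  rw [dist_comm y, dist_comm y x, dist_comm y (T x)] at hcvx
  have hTx := mul_le_mul_of_nonneg_left (hT x) hβ.1
  rw [dist_comm (T x) x] at hTx
  linarith

end IsPUniformlyConvex

theorem almostFirmlyNonexpansiveAt_half_zero_iff {p c : ℝ} {P : G → G} {y : G} :
    AlmostFirmlyNonexpansiveAt p c (1 / 2) 0 P y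
      ↔ ∀ x, dist (P x) y ^ p ≤ dist x y ^ p - c / 2 * dist (P x) x ^ p := by
  norm_num [AlmostFirmlyNonexpansiveAt]

namespace AlmostFirmlyNonexpansiveAt

variable {p c α ε : ℝ} {geo : G → G → ℝ → G} {y : G}

theorem relax (hG : IsPUniformlyConvex p c geo)
    (hgeo : ∀ (x y : G), ∀ t ∈ Icc (0:ℝ) 1, dist x (geo x y t) = t * dist x y)
    {T : G → G} (hT : AlmostFirmlyNonexpansiveAt p c α ε T y)
    (hα₀ : 0 < α) (hα₁ : α ≤ 1) {β : ℝ} (hβ₀ : 0 < β) (hβ₁ : β ≤ 1) :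
    AlmostFirmlyNonexpansiveAt p c (relaxedConstant α p β) (ε * β)
      (fun x => geo x (T x) β) y := by
  intro x
  have hdist : dist (geo x (T x) β) x ^ p = β ^ p * dist x (T x) ^ p := by
    rw [dist_comm, hgeo x (T x) β ⟨hβ₀.le, hβ₁⟩, Real.mul_rpow hβ₀.le dist_nonneg]
  have hratio := one_sub_relaxedConstant_div_mul_rpow (p := p) hα₀ hα₁ hβ₀ hβ₁
  calc dist (geo x (T x) β) y ^ p
      ≤ (1 + ε * β) * dist x y ^ p
        - c / 2 * (β * (1 - β) + β * ((1 - α) / α)) * dist x (T x) ^ p :=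
        hG.dist_geo_rpow_le hT ⟨hβ₀.le, hβ₁⟩ x
    _ = (1 + ε * β) * dist x y ^ p - (1 - relaxedConstant α p β) / relaxedConstant α p β
          * (c / 2 * dist (geo x (T x) β) x ^ p) := by
        rw [hdist, ← hratio]
        ring

/-- The composition rule with `α₁ = 1/2`, where `ᾱ` simplifies to `1 / (c/2 (1 − α) + 1)`. -/
theorem comp_of_half (hG : IsPUniformlyConvex p c geo) (hc : 0 ≤ c) {P S : G → G}
    (hP : AlmostFirmlyNonexpansiveAt p c (1 / 2) 0 P y)
    (hS : AlmostFirmlyNonexpansiveAt p c α ε S y) (hα₀ : 0 < α) (hα₁ : α ≤ 1) :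
    AlmostFirmlyNonexpansiveAt p c (1 / (c / 2 * (1 - α) + 1)) ε (P ∘ S) y := by
  intro x
  have hPS := almostFirmlyNonexpansiveAt_half_zero_iff.1 hP (S x)
  have hS' := hS x
  rw [dist_comm (S x) x] at hS'
  have hmid := mul_le_mul_of_nonneg_left
    (hG.mul_dist_rpow_le x (P (S x)) (S x) hα₀ hα₁) (by positivity : 0 ≤ c / 2)
  have hconst : (1 - 1 / (c / 2 * (1 - α) + 1)) / (1 / (c / 2 * (1 - α) + 1))
      = c / 2 * (1 - α) := by
    have hK : 0 < c / 2 * (1 - α) + 1 := by nlinarith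
    rw [one_div, div_inv_eq_mul, sub_mul, one_mul, inv_mul_cancel₀ hK.ne']
    ring
  rw [Function.comp_apply, hconst, dist_comm (P (S x)) x]
  rw [dist_comm (P (S x)) (S x)] at hPS
  linarith

end AlmostFirmlyNonexpansiveAt

end UniformlyConvex

theorem projected_gradient_pafne_general {G : Type*} [MetricSpace G] (p c : ℝ)
    (hc : c ∈ Set.Ioc (1:ℝ) 2)
    (geo : G → G → ℝ → G)
    (hcvx : ∀ (x y z : G), ∀ t ∈ Set.Icc (0:ℝ) 1,
      dist z (geo x y t) ^ p
        ≤ (1 - t) * dist z x ^ p + t * dist z y ^ p - c / 2 * t * (1 - t) * dist x y ^ p)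
    (hgeo0 : ∀ (x y : G), ∀ t ∈ Set.Icc (0:ℝ) 1, dist x (geo x y t) = t * dist x y)
    (C : Set G)
    (g : G → ℝ)
    (P : G → G)
    (hPfirm : ∀ y ∈ C, ∀ x : G,
      dist (P x) y ^ p ≤ dist x y ^ p - c / 2 * dist (P x) x ^ p)
    (proxg : G → G)
    (hproxfirm : ∀ y : G, (∀ z, g y ≤ g z) → ∀ x : G,
      dist (proxg x) y ^ p
        ≤ (1 + epsc c) * dist x y ^ p
          - (1 - alphac c) / alphac c * (c / 2 * dist (proxg x) x ^ p))
    (β : ℝ) (hβ : β ∈ Set.Ioo (0:ℝ) 1) :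
    ∀ y ∈ C, (∀ z, g y ≤ g z) → ∀ x : G,
      dist (P (geo x (proxg x) β)) y ^ p
        ≤ (1 + epsc c * β) * dist x y ^ p
          - (1 - alphaPG p c β) / alphaPG p c β
            * (c / 2 * dist (P (geo x (proxg x) β)) x ^ p) := by
  intro y hyC hymin
  obtain ⟨hα₀, hα₁⟩ := alphac_mem_Ioo hc.1
  have hP : AlmostFirmlyNonexpansiveAt p c (1 / 2) 0 P y :=
    almostFirmlyNonexpansiveAt_half_zero_iff.2 (hPfirm y hyC)
  have hrelax := AlmostFirmlyNonexpansiveAt.relax hcvx hgeo0 (hproxfirm y hymin)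
    hα₀ hα₁.le hβ.1 hβ.2.le
  obtain ⟨hαβ₀, hαβ₁⟩ := relaxedConstant_mem_Ioc (p := p) hα₀ hα₁.le hβ.1 hβ.2.le
  exact hP.comp_of_half hcvx (by linarith [hc.1]) hrelax hαβ₀ hαβ₁

/-- The projected-gradient operator `P_C ∘ (β prox ⊕ (1−β)Id)` is pointwise almost `α`-firmly
nonexpansive at every `y ∈ C ∩ argmin g` with constant `α_PG` and violation `ε_c·β`. -/
theorem projected_gradient_pafne {G : Type*} [MetricSpace G] (p c : ℝ)
    (hp : 1 < p) (hc : c ∈ Set.Ioc (1:ℝ) 2)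
    (geo : G → G → ℝ → G)
    (hcvx : ∀ (x y z : G), ∀ t ∈ Set.Icc (0:ℝ) 1,
      dist z (geo x y t) ^ p
        ≤ (1 - t) * dist z x ^ p + t * dist z y ^ p - c / 2 * t * (1 - t) * dist x y ^ p)
    (hgeo0 : ∀ (x y : G), ∀ t ∈ Set.Icc (0:ℝ) 1, dist x (geo x y t) = t * dist x y)
    (hgeo1 : ∀ (x y : G), ∀ t ∈ Set.Icc (0:ℝ) 1, dist (geo x y t) y = (1 - t) * dist x y)
    (hgeoid : ∀ (x : G) (t : ℝ), geo x x t = x)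
    (hsym : ∀ q a b : G, Perp geo q a b → Perp geo q b a)
    (C : Set G) (hCcl : IsClosed C)
    (hCconv : ∀ x ∈ C, ∀ y ∈ C, ∀ t ∈ Set.Icc (0:ℝ) 1, geo x y t ∈ C)
    (g : G → ℝ) (hglsc : LowerSemicontinuous g)
    (hgconv : ∀ (x y : G), ∀ t ∈ Set.Icc (0:ℝ) 1, g (geo x y t) ≤ (1 - t) * g x + t * g y)
    (P : G → G) (hPC : ∀ x : G, P x ∈ C) (hPfix : ∀ y ∈ C, P y = y)
    (hPfirm : ∀ y ∈ C, ∀ x : G,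
      dist (P x) y ^ p ≤ dist x y ^ p - c / 2 * dist (P x) x ^ p)
    (proxg : G → G) (lam : ℝ) (hlam : 0 < lam)
    (hproxfix : ∀ y : G, (∀ z, g y ≤ g z) → proxg y = y)
    (hproxfirm : ∀ y : G, (∀ z, g y ≤ g z) → ∀ x : G,
      dist (proxg x) y ^ p
        ≤ (1 + epsc c) * dist x y ^ p
          - (1 - alphac c) / alphac c * (c / 2 * dist (proxg x) x ^ p))
    (β : ℝ) (hβ : β ∈ Set.Ioo (0:ℝ) 1)
    (hΩ : ∃ y ∈ C, ∀ z, g y ≤ g z) :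
    ∀ y ∈ C, (∀ z, g y ≤ g z) → ∀ x : G,
      dist (P (geo x (proxg x) β)) y ^ p
        ≤ (1 + epsc c * β) * dist x y ^ p
          - (1 - alphaPG p c β) / alphaPG p c β
            * (c / 2 * dist (P (geo x (proxg x) β)) x ^ p) :=
  projected_gradient_pafne_general p c hc geo hcvx hgeo0 C g P hPfirm proxg hproxfirm β hβ
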